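/- For every integer k ≥ 3, SP(2k+2, k) ≤ 2k+3; that is, every Sperner k-partition system on a (2k+2)-element set has at most 2k+3 partitions. -/

import Mathlib

/-!
Suppose a Sperner `k`-partition system on `n = 2k + 2` points had `m ≥ n + 2` members. Then every
class has at least two points, so each partition has at least `k - 2` two-element classes, and no
class occurs in two partitions. For a point `x`, deleting `x` from the `m` classes through it leaves
an antichain of `m` subsets of the other `n - 1` points. The points of its singletons lie in no
other member, and by Sperner's theorem (`C(d, d/2) ≤ d + 2` for `d ≤ 4`) the remaining members
cover at least five points; so at most `n - 6` two-element classes pass through `x`. Double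
counting incidences of points and two-element classes gives `2m(k - 2) ≤ n(n - 6)`, that is
`m ≤ 2k + 2`.
-/

open Finset

/-- `P` is a partition of the finite set `X` into exactly `k` nonempty classes. -/
def IsPartitionInto {α : Type*} [DecidableEq α] (X : Finset α) (k : ℕ)
    (P : Finset (Finset α)) : Prop :=
  P.card = k ∧ (∀ A ∈ P, A.Nonempty) ∧ (∀ A ∈ P, A ⊆ X) ∧
    ∀ x ∈ X, ∃! A, A ∈ P ∧ x ∈ A

/-- `Sys` is a Sperner `k`-partition system on the finite set `X`: every member is a
`k`-partition of `X` and no class of one partition is contained in a class of a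
different partition of the system. -/
def IsSpernerPartitionSystem {α : Type*} [DecidableEq α] (X : Finset α) (k : ℕ)
    (Sys : Finset (Finset (Finset α))) : Prop :=
  (∀ P ∈ Sys, IsPartitionInto X k P) ∧
    ∀ P ∈ Sys, ∀ Q ∈ Sys, P ≠ Q → ∀ A ∈ P, ∀ B ∈ Q, ¬ A ⊆ B

/-- `SP n k` is the maximum number of partitions in a Sperner `k`-partition system
on an `n`-element set. -/
noncomputable def SP (n k : ℕ) : ℕ :=
  sSup {m | ∃ Sys : Finset (Finset (Finset (Fin n))),
    IsSpernerPartitionSystem Finset.univ k Sys ∧ Sys.card = m}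

variable {α : Type*} [DecidableEq α]

theorem IsAntichain.sperner_of_forall_subset {N : Finset α} {𝒜 : Finset (Finset α)}
    (h𝒜 : IsAntichain (· ⊆ ·) (𝒜 : Set (Finset α))) (h𝒜N : ∀ A ∈ 𝒜, A ⊆ N) :
    #𝒜 ≤ (#N).choose (#N / 2) := by
  have hrestrict : ∀ A ∈ 𝒜, (A.subtype (· ∈ N)).map (Function.Embedding.subtype _) = A :=
    fun A hA => subtype_map_of_mem (h𝒜N A hA)
  have hinj : Set.InjOn (Finset.subtype (· ∈ N)) 𝒜 := fun A hA B hB hAB => by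
    rw [← hrestrict A hA, ← hrestrict B hB, hAB]
  have hanti : IsAntichain (· ⊆ ·) (((𝒜.image (Finset.subtype (· ∈ N))) : Finset (Finset N)) :
      Set (Finset N)) := by
    rintro _ hA' _ hB' hne hsub
    obtain ⟨A, hA, rfl⟩ := mem_image.1 hA'
    obtain ⟨B, hB, rfl⟩ := mem_image.1 hB'
    refine hne (congrArg _ (h𝒜.eq hA hB ?_))
    rw [← hrestrict A hA, ← hrestrict B hB]
    exact map_subset_map.2 hsub
  rw [← card_image_of_injOn hinj]
  simpa using hanti.sperner

theorem IsAntichain.image_erase {𝒜 : Finset (Finset α)}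
    (h𝒜 : IsAntichain (· ⊆ ·) (𝒜 : Set (Finset α))) {x : α} (hx : ∀ A ∈ 𝒜, x ∈ A) :
    IsAntichain (· ⊆ ·) ((𝒜.image fun A => A.erase x : Finset (Finset α)) : Set (Finset α)) := by
  rintro _ hA' _ hB' hne hsub
  obtain ⟨A, hA, rfl⟩ := mem_image.1 hA'
  obtain ⟨B, hB, rfl⟩ := mem_image.1 hB'
  refine hne (congrArg (fun A : Finset α => A.erase x) (h𝒜.eq hA hB ?_))
  rw [← insert_erase (hx A hA), ← insert_erase (hx B hB)]
  exact insert_subset_insert x hsub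

theorem Nat.choose_half_le_add_two {n : ℕ} (hn : n ≤ 4) : n.choose (n / 2) ≤ n + 2 := by
  interval_cases n <;> decide

theorem IsAntichain.card_filter_card_eq_one_add_card_le {Y : Finset α} {𝒜 : Finset (Finset α)}
    (h𝒜Y : ∀ A ∈ 𝒜, A ⊆ Y) (h𝒜 : IsAntichain (· ⊆ ·) (𝒜 : Set (Finset α))) :
    #{A ∈ 𝒜 | #A = 1} + #({A ∈ 𝒜 | #A ≠ 1}.biUnion id) ≤ #Y := by
  set 𝒮 := {A ∈ 𝒜 | #A = 1}
  have hpoints : #𝒮 ≤ #(𝒮.biUnion id) := by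
    refine card_le_card_biUnion (fun A hA B hB hAB => ?_) fun A hA => card_pos.1 (by
      simp [(mem_filter.1 hA).2])
    obtain ⟨a, rfl⟩ := card_eq_one.1 (mem_filter.1 hA).2
    obtain ⟨b, rfl⟩ := card_eq_one.1 (mem_filter.1 hB).2
    simpa [Function.onFun] using fun h : a = b => hAB (h ▸ rfl)
  have hdisj : Disjoint (𝒮.biUnion id) ({A ∈ 𝒜 | #A ≠ 1}.biUnion id) := by
    simp only [𝒮, disjoint_left, mem_biUnion, id, mem_filter, not_exists, not_and]
    rintro y ⟨A, ⟨hA, hA1⟩, hyA⟩ B ⟨hB, hB1⟩ hyB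
    obtain ⟨a, rfl⟩ := card_eq_one.1 hA1
    have hAB := h𝒜.eq hA hB (by simpa [mem_singleton.1 hyA] using hyB)
    exact hB1 (hAB ▸ hA1)
  have hsub : 𝒮.biUnion id ∪ {A ∈ 𝒜 | #A ≠ 1}.biUnion id ⊆ Y :=
    union_subset (biUnion_subset.2 fun A hA => h𝒜Y A (filter_subset _ _ hA))
      (biUnion_subset.2 fun A hA => h𝒜Y A (filter_subset _ _ hA))
  have := card_le_card hsub
  rw [card_union_of_disjoint hdisj] at this
  omega

theorem IsAntichain.card_filter_card_eq_one_add_five_le {Y : Finset α} {𝒜 : Finset (Finset α)}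
    (h𝒜Y : ∀ A ∈ 𝒜, A ⊆ Y) (h𝒜 : IsAntichain (· ⊆ ·) (𝒜 : Set (Finset α)))
    (hcard : #Y + 3 ≤ #𝒜) : #{A ∈ 𝒜 | #A = 1} + 5 ≤ #Y := by
  have hpoints := h𝒜.card_filter_card_eq_one_add_card_le h𝒜Y
  have hrest : #{A ∈ 𝒜 | #A ≠ 1} ≤ _ :=
    (h𝒜.subset (coe_subset.2 (filter_subset _ _))).sperner_of_forall_subset
      fun A hA => subset_biUnion_of_mem id hA
  have hsplit : #{A ∈ 𝒜 | #A = 1} + #{A ∈ 𝒜 | #A ≠ 1} = #𝒜 :=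
    card_filter_add_card_filter_not _
  by_contra! h
  have := Nat.choose_half_le_add_two (n := #({A ∈ 𝒜 | #A ≠ 1}.biUnion id)) (by omega)
  omega

namespace IsPartitionInto

variable {X : Finset α} {k : ℕ} {P : Finset (Finset α)}

theorem eq_of_mem_of_mem (hP : IsPartitionInto X k P) {A B : Finset α} (hA : A ∈ P)
    (hB : B ∈ P) {x : α} (hxA : x ∈ A) (hxB : x ∈ B) : A = B := by
  obtain ⟨C, -, hC⟩ := hP.2.2.2 x (hP.2.2.1 A hA hxA)
  exact (hC A ⟨hA, hxA⟩).trans (hC B ⟨hB, hxB⟩).symm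

theorem card_filter_mem (hP : IsPartitionInto X k P) {x : α} (hx : x ∈ X) :
    #{A ∈ P | x ∈ A} = 1 := by
  obtain ⟨C, hC, hCuniq⟩ := hP.2.2.2 x hx
  exact card_eq_one.2 ⟨C, by ext A; simpa using ⟨hCuniq A, by rintro rfl; exact hC⟩⟩

theorem sum_card (hP : IsPartitionInto X k P) : ∑ A ∈ P, #A = #X := by
  have hdisj : (P : Set (Finset α)).PairwiseDisjoint id := fun A hA B hB hAB =>
    disjoint_left.2 fun x hxA hxB => hAB (hP.eq_of_mem_of_mem hA hB hxA hxB)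
  have hcover : P.biUnion id = X := by
    refine (biUnion_subset.2 hP.2.2.1).antisymm fun x hx => ?_
    obtain ⟨A, ⟨hA, hxA⟩, -⟩ := hP.2.2.2 x hx
    exact mem_biUnion.2 ⟨A, hA, hxA⟩
  rw [← hcover, card_biUnion hdisj]
  rfl

theorem le_card_filter_card_eq_two (hP : IsPartitionInto X k P) (h2 : ∀ A ∈ P, 2 ≤ #A) :
    3 * k ≤ #X + #{A ∈ P | #A = 2} := by
  have hpairs : ∑ A ∈ P with #A = 2, #A = 2 * #{A ∈ P | #A = 2} := by
    rw [sum_congr rfl fun A hA => (mem_filter.1 hA).2, sum_const, smul_eq_mul, mul_comm]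
  have hrest : #{A ∈ P | #A ≠ 2} • 3 ≤ ∑ A ∈ P with #A ≠ 2, #A :=
    card_nsmul_le_sum _ _ _ fun A hA => by
      have := h2 A (mem_filter.1 hA).1
      have := (mem_filter.1 hA).2
      omega
  rw [smul_eq_mul] at hrest
  have hsum : ∑ A ∈ P with #A = 2, #A + ∑ A ∈ P with #A ≠ 2, #A = #X := by
    rw [sum_filter_add_sum_filter_not, hP.sum_card]
  have hcard : #{A ∈ P | #A = 2} + #{A ∈ P | #A ≠ 2} = k := by
    rw [card_filter_add_card_filter_not, hP.1]
  omega

end IsPartitionInto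

namespace IsSpernerPartitionSystem

variable {X : Finset α} {k : ℕ} {Sys : Finset (Finset (Finset α))}

theorem eq_of_subset (hS : IsSpernerPartitionSystem X k Sys) {P Q : Finset (Finset α)}
    (hP : P ∈ Sys) (hQ : Q ∈ Sys) {A B : Finset α} (hA : A ∈ P) (hB : B ∈ Q) (hAB : A ⊆ B) :
    A = B := by
  by_cases hPQ : P = Q
  · subst hPQ
    obtain ⟨x, hx⟩ := (hS.1 P hP).2.1 A hA
    exact (hS.1 P hP).eq_of_mem_of_mem hA hB hx (hAB hx)
  · exact absurd hAB (hS.2 P hP Q hQ hPQ A hA B hB)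

theorem isAntichain_biUnion (hS : IsSpernerPartitionSystem X k Sys) :
    IsAntichain (· ⊆ ·) ((Sys.biUnion id : Finset (Finset α)) : Set (Finset α)) := by
  intro A hA B hB hAB hsub
  obtain ⟨P, hP, hAP⟩ := mem_biUnion.1 hA
  obtain ⟨Q, hQ, hBQ⟩ := mem_biUnion.1 hB
  exact hAB (hS.eq_of_subset hP hQ hAP hBQ hsub)

theorem card_filter_biUnion (hS : IsSpernerPartitionSystem X k Sys) (p : Finset α → Prop)
    [DecidablePred p] : #{A ∈ Sys.biUnion id | p A} = ∑ P ∈ Sys, #{A ∈ P | p A} := by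
  rw [filter_biUnion, card_biUnion]
  · rfl
  · intro P hP Q hQ hPQ
    exact disjoint_left.2 fun A hAP hAQ =>
      hS.2 P hP Q hQ hPQ A (mem_filter.1 hAP).1 A (mem_filter.1 hAQ).1 subset_rfl

theorem two_le_card (hS : IsSpernerPartitionSystem X k Sys) (hSys : 1 < #Sys)
    {P : Finset (Finset α)} (hP : P ∈ Sys) {A : Finset α} (hA : A ∈ P) : 2 ≤ #A := by
  obtain ⟨x, hxA⟩ := (hS.1 P hP).2.1 A hA
  obtain ⟨Q, hQ, hQP⟩ := exists_mem_ne hSys P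
  obtain ⟨B, ⟨hBQ, hxB⟩, -⟩ := (hS.1 Q hQ).2.2.2 x ((hS.1 P hP).2.2.1 A hA hxA)
  obtain ⟨y, hyA, hyB⟩ := not_subset.1 (hS.2 P hP Q hQ hQP.symm A hA B hBQ)
  exact one_lt_card.2 ⟨x, hxA, y, hyA, by rintro rfl; exact hyB hxB⟩

theorem subset_of_mem_biUnion (hS : IsSpernerPartitionSystem X k Sys) {A : Finset α}
    (hA : A ∈ Sys.biUnion id) : A ⊆ X := by
  obtain ⟨P, hP, hAP⟩ := mem_biUnion.1 hA
  exact (hS.1 P hP).2.2.1 A hAP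

theorem card_filter_mem_biUnion (hS : IsSpernerPartitionSystem X k Sys) {x : α} (hx : x ∈ X) :
    #{A ∈ Sys.biUnion id | x ∈ A} = #Sys := by
  rw [hS.card_filter_biUnion, sum_congr rfl fun P hP => (hS.1 P hP).card_filter_mem hx,
    sum_const, smul_eq_mul, mul_one]

theorem card_filter_card_eq_two_mem_add_six_le (hS : IsSpernerPartitionSystem X k Sys)
    (hSys : #X + 2 ≤ #Sys) {x : α} (hx : x ∈ X) :
    #{A ∈ {A ∈ Sys.biUnion id | #A = 2} | x ∈ A} + 6 ≤ #X := by
  set 𝒞 := {A ∈ Sys.biUnion id | x ∈ A}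
  have hx𝒞 : ∀ A ∈ 𝒞, x ∈ A := fun A hA => (mem_filter.1 hA).2
  have hinj : Set.InjOn (fun A : Finset α => A.erase x) 𝒞 := (erase_injOn' x).mono hx𝒞
  have hanti :=
    (hS.isAntichain_biUnion.subset (coe_subset.2 (filter_subset _ _))).image_erase hx𝒞
  have hsub : ∀ A' ∈ 𝒞.image (fun A : Finset α => A.erase x), A' ⊆ X.erase x :=
    forall_mem_image.2 fun A hA =>
      erase_subset_erase x (hS.subset_of_mem_biUnion (mem_filter.1 hA).1)
  have hXpos : 0 < #X := card_pos.2 ⟨x, hx⟩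
  have key := hanti.card_filter_card_eq_one_add_five_le hsub (by
    rw [card_image_of_injOn hinj, hS.card_filter_mem_biUnion hx, card_erase_of_mem hx]; omega)
  rw [filter_image, card_image_of_injOn (hinj.mono (filter_subset _ _)),
    card_erase_of_mem hx] at key
  have hpairs : {A ∈ 𝒞 | #(A.erase x) = 1} = {A ∈ {A ∈ Sys.biUnion id | #A = 2} | x ∈ A} := by
    ext A
    simp only [𝒞, mem_filter]
    constructor
    · rintro ⟨⟨hA, hxA⟩, h1⟩
      rw [card_erase_of_mem hxA] at h1
      exact ⟨⟨hA, by omega⟩, hxA⟩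
    · rintro ⟨⟨hA, h2⟩, hxA⟩
      exact ⟨⟨hA, hxA⟩, by rw [card_erase_of_mem hxA, h2]⟩
  rw [hpairs] at key
  omega

theorem two_mul_card_mul_le (hS : IsSpernerPartitionSystem X k Sys) (hSys : #X + 2 ≤ #Sys) :
    2 * (#Sys * (3 * k - #X)) ≤ #X * (#X - 6) := by
  have hvertex {x : α} (hx : x ∈ X) := hS.card_filter_card_eq_two_mem_add_six_le hSys hx
  set pairs := {A ∈ Sys.biUnion id | #A = 2}
  have hlower : #Sys * (3 * k - #X) ≤ #pairs := by
    rw [hS.card_filter_biUnion]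
    calc #Sys * (3 * k - #X) = ∑ _P ∈ Sys, (3 * k - #X) := by rw [sum_const, smul_eq_mul]
      _ ≤ _ := sum_le_sum fun P hP => by
        have := (hS.1 P hP).le_card_filter_card_eq_two
          fun A hA => hS.two_le_card (by omega) hP hA
        omega
  have hupper : ∑ A ∈ pairs, #(X ∩ A) ≤ #X * (#X - 6) := sum_card_inter_le fun x hx => by
    have := hvertex hx
    omega
  have hdouble : ∑ A ∈ pairs, #(X ∩ A) = 2 * #pairs := by
    rw [sum_congr rfl fun A hA => by
      rw [inter_eq_right.2 (hS.subset_of_mem_biUnion (mem_filter.1 hA).1), (mem_filter.1 hA).2],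
      sum_const, smul_eq_mul, mul_comm]
  omega

theorem card_le_of_card_eq (hS : IsSpernerPartitionSystem X k Sys) (hk : 3 ≤ k)
    (hX : #X = 2 * k + 2) : #Sys ≤ 2 * k + 3 := by
  by_contra! h
  have := hS.two_mul_card_mul_le (by omega)
  obtain ⟨j, rfl⟩ : ∃ j, k = j + 3 := ⟨k - 3, by omega⟩
  rw [hX, show 3 * (j + 3) - (2 * (j + 3) + 2) = j + 1 by omega,
    show 2 * (j + 3) + 2 - 6 = 2 * j + 2 by omega] at this
  nlinarith

end IsSpernerPartitionSystem

theorem SP_two_k_add_two_upper (k : ℕ) (hk : 3 ≤ k) :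
    SP (2 * k + 2) k ≤ 2 * k + 3 := by
  refine csSup_le ⟨0, ∅, ⟨by simp, by simp⟩, rfl⟩ ?_
  rintro m ⟨Sys, hS, rfl⟩
  exact hS.card_le_of_card_eq hk (by simp)
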